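/- Let a be any real number, set x₀ = Real.sqrt ((1 + Real.sqrt (1 + a²)) / 2), and define the vector field v : ℝ² → ℝ² by v(x, y) = (x² − y² − 1, −2xy + a). Then x₀ > 0 and v(x, y) = (0, 0) if and only if (x, y) = (x₀, a / (2·x₀)) or (x, y) = (−x₀, −a / (2·x₀)); in particular, for every value of the parameter a the field v has exactly two singular points. -/

import Mathlib

/-!
Identify `(x, y)` with `z = x + y i`. Since `z² = (x² − y²) + 2xy i`, the field vanishes exactly
when `z² = 1 + a i`, and `z₀ = x₀ + (a / 2x₀) i` is one square root of `1 + a i`: with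
`s = √(1 + a²)` and `x₀² = (1 + s)/2`, the real part `x₀² − a²/(4x₀²) = 1` amounts to `s² = 1 + a²`.
The zeros are therefore `±z₀`, and they are distinct because `x₀ > 0`.
-/

open Complex

theorem Complex.mk_sq (x y : ℝ) : (⟨x, y⟩ : ℂ) ^ 2 = ⟨x ^ 2 - y ^ 2, 2 * x * y⟩ :=
  Complex.ext (by simp only [sq, mul_re]) (by simp only [sq, mul_im]; ring)

theorem sq_mk_div_eq_mk_one_of_eq_sqrt (a x₀ : ℝ)
    (hx₀ : x₀ = √((1 + √(1 + a ^ 2)) / 2)) :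
    (⟨x₀, a / (2 * x₀)⟩ : ℂ) ^ 2 = ⟨1, a⟩ := by
  set s := √(1 + a ^ 2)
  have hs : s ^ 2 = 1 + a ^ 2 := Real.sq_sqrt (by positivity)
  have hx₀_sq : x₀ ^ 2 = (1 + s) / 2 := by
    rw [hx₀]
    exact Real.sq_sqrt (by positivity)
  have hx₀_ne : x₀ ≠ 0 := by
    rintro rfl
    nlinarith [Real.sqrt_nonneg (1 + a ^ 2)]
  rw [Complex.mk_sq]
  apply Complex.ext
  · field_simp
    linear_combination (4 * x₀ ^ 2 + 2 * s - 2) * hx₀_sq + hs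
  · field_simp

/-- For every parameter `a`, the saddle-connection model field
`v(x,y) = (x² − y² − 1, −2xy + a)` has exactly two singular points, namely
`(x₀, a/(2x₀))` and `(−x₀, −a/(2x₀))` with `x₀ = √((1 + √(1 + a²))/2) > 0`. -/
theorem saddleConnection_two_zeros (a : ℝ)
    (x₀ : ℝ) (hx₀ : x₀ = Real.sqrt ((1 + Real.sqrt (1 + a ^ 2)) / 2))
    (v : ℝ × ℝ → ℝ × ℝ)
    (hv : ∀ x y : ℝ, v (x, y) = (x ^ 2 - y ^ 2 - 1, -2 * x * y + a)) :
    0 < x₀ ∧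
    (∀ x y : ℝ, v (x, y) = (0, 0) ↔
      (x, y) = (x₀, a / (2 * x₀)) ∨ (x, y) = (-x₀, -a / (2 * x₀))) ∧
    {p : ℝ × ℝ | v p = (0, 0)}.ncard = 2 := by
  have hpos : 0 < x₀ := hx₀ ▸ Real.sqrt_pos.mpr (by positivity)
  have hzero : ∀ x y : ℝ, v (x, y) = (0, 0) ↔ (⟨x, y⟩ : ℂ) ^ 2 = ⟨x₀, a / (2 * x₀)⟩ ^ 2 := by
    intro x y
    rw [hv, sq_mk_div_eq_mk_one_of_eq_sqrt a x₀ hx₀, Complex.mk_sq]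
    simp only [Prod.mk.injEq, Complex.mk.injEq]
    constructor <;> rintro ⟨h₁, h₂⟩ <;> constructor <;> linarith
  have hiff : ∀ x y : ℝ, v (x, y) = (0, 0) ↔
      (x, y) = (x₀, a / (2 * x₀)) ∨ (x, y) = (-x₀, -a / (2 * x₀)) := by
    intro x y
    rw [hzero, sq_eq_sq_iff_eq_or_eq_neg]
    simp [Complex.ext_iff, neg_div]
  refine ⟨hpos, hiff, ?_⟩
  rw [show {p : ℝ × ℝ | v p = (0, 0)} = {(x₀, a / (2 * x₀)), (-x₀, -a / (2 * x₀))} from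
    Set.ext fun ⟨x, y⟩ => hiff x y]
  refine Set.ncard_pair fun h => ?_
  linarith [congrArg Prod.fst h]
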